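/- Let χ : ℂ → ℂ satisfy assumptions (A1) and (A2) with data (μ, ν, c₀, C), and suppose there exists z₀ ∈ ℂ such that μ(z₀) is purely imaginary and nonzero (i.e. Re μ(z₀) = 0 and μ(z₀) ≠ 0). Then the limit lim_{λ→0⁺} ∏_{k=0}^{∞} χ(sin λ·(cos λ)^k·z₀) does not exist. -/

import Mathlib

open Filter Topology

/-- Assumption (A1) on a (characteristic) function `χ : ℂ → ℂ`: `χ 0 = 1`, and there is
`δ > 0` such that for every `z` the map `x ↦ χ (x z)` (for real `x`, `|x| < δ`) is
differentiable with derivative bounded by a constant `C₀ z ≥ 0`, which is itself bounded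
by a constant `C₀unif` for `‖z‖ < η`. -/
structure AssumptionA1 (χ : ℂ → ℂ) where
  chi_zero : χ 0 = 1
  δ : ℝ
  δ_pos : 0 < δ
  C₀ : ℂ → ℝ
  C₀_nonneg : ∀ z : ℂ, 0 ≤ C₀ z
  deriv_bound : ∀ (z : ℂ) (x : ℝ), |x| < δ →
    ∃ d : ℂ, HasDerivAt (fun y : ℝ => χ ((y : ℂ) * z)) d x ∧ ‖d‖ ≤ C₀ z
  η : ℝ
  η_pos : 0 < η
  C₀unif : ℝ
  C₀unif_nonneg : 0 ≤ C₀unif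
  unif : ∀ z : ℂ, ‖z‖ < η → C₀ z ≤ C₀unif

/-- Assumption (A2) on `χ : ℂ → ℂ` with data `(μ, ν, c₀, C)`: `μ` and `ν` are
real-homogeneous of degrees 1 and 2 respectively, and
`χ z = 1 + μ z + ½ ν z + R z` with `‖R z‖ ≤ C ‖z‖³` for `‖z‖ < c₀`. -/
structure AssumptionA2 (χ : ℂ → ℂ) (μ ν : ℂ → ℂ) (c₀ C : ℝ) where
  c₀_pos : 0 < c₀
  C_nonneg : 0 ≤ C
  μ_hom : ∀ (t : ℝ) (z : ℂ), μ ((t : ℂ) * z) = (t : ℂ) * μ z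
  ν_hom : ∀ (t : ℝ) (z : ℂ), ν ((t : ℂ) * z) = (t : ℂ) ^ 2 * ν z
  expansion : ∀ z : ℂ, ‖z‖ < c₀ → ‖χ z - 1 - μ z - (1 / 2 : ℂ) * ν z‖ ≤ C * ‖z‖ ^ 3

/-!
Along a ray, (A2) gives `χ(τz) = 1 + τμ(z) + τ²ν(z)/2 + O(τ³)`, hence
`log χ(τz) = τμ(z) + τ²(ν(z) - μ(z)²)/2 + O(τ³)`. For `t_k = sin λ cos^k λ` one has
`∑ t_k = sin λ / (1 - cos λ)` and `∑ t_k² = 1`, so `∑ O(t_k³) = O(sin λ)` and the product converges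
to `exp(μ(z₀) sin λ / (1 - cos λ) + (ν(z₀) - μ(z₀)²)/2 + o(1))` as `λ → 0⁺`. If these limits
converged, so would `exp(T μ(z₀))` as `T → ∞`, because `λ = 2 arctan(1/T)` gives
`sin λ / (1 - cos λ) = T`; but for purely imaginary `μ(z₀) ≠ 0` this phase returns to both `1`
and `-1` along `T → ∞`.
-/

open Asymptotics

section
variable {α : Type*} {l : Filter α} {g τ : α → ℂ} {a b : ℂ}

lemma isBigO_pow_of_tendsto_zero (hτ : Tendsto τ l (𝓝 0)) {m n : ℕ} (h : m < n) :
    (fun x => τ x ^ n) =O[l] fun x => τ x ^ m :=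
  (isLittleO_pow_pow h).isBigO.comp_tendsto hτ

lemma isBigO_sub_one_of_isBigO_taylor (hτ : Tendsto τ l (𝓝 0))
    (hg : (fun x => g x - 1 - τ x * a - τ x ^ 2 * b) =O[l] fun x => τ x ^ 3) :
    (fun x => g x - 1) =O[l] τ := by
  have h3 := hg.trans (isBigO_pow_of_tendsto_zero hτ (by norm_num : 1 < 3))
  have h2 := isBigO_pow_of_tendsto_zero hτ (by norm_num : 1 < 2)
  simp only [pow_one] at h3 h2
  refine ((h3.add ((isBigO_refl τ l).const_mul_left a)).add (h2.const_mul_left b)).congr_left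
    fun x => ?_
  ring

lemma isBigO_log_sub_taylor (hτ : Tendsto τ l (𝓝 0))
    (hg : (fun x => g x - 1 - τ x * a - τ x ^ 2 * b) =O[l] fun x => τ x ^ 3) :
    (fun x => Complex.log (g x) - τ x * a - τ x ^ 2 * (b - a ^ 2 / 2)) =O[l] fun x => τ x ^ 3 := by
  set u := fun x => g x - 1 with hu_def
  have hu : u =O[l] τ := isBigO_sub_one_of_isBigO_taylor hτ hg
  have hlin : (fun x => u x - τ x * a) =O[l] fun x => τ x ^ 2 := by
    refine ((hg.trans (isBigO_pow_of_tendsto_zero hτ (by norm_num : 2 < 3))).add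
      ((isBigO_refl (fun x => τ x ^ 2) l).const_mul_left b)).congr_left fun x => ?_
    simp only [hu_def]; ring
  have hsq : (fun x => u x ^ 2 - (τ x * a) ^ 2) =O[l] fun x => τ x ^ 3 := by
    refine (hlin.mul (hu.add ((isBigO_refl τ l).const_mul_left a))).congr
      (fun x => ?_) (fun x => ?_) <;> ring
  have hlog : (fun x => Complex.log (1 + u x) - (u x - u x ^ 2 / 2)) =O[l] fun x => τ x ^ 3 := by
    refine (((Complex.log_sub_logTaylor_isBigO 2).comp_tendsto (hu.trans_tendsto hτ)).trans
      (hu.pow 3)).congr_left fun x => ?_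
    simp only [Function.comp_apply, Pi.add_apply, Complex.logTaylor_succ, Complex.logTaylor_zero]
    push_cast
    ring
  refine ((hlog.add hg).sub (hsq.const_mul_left (1 / 2))).congr_left fun x => ?_
  simp only [hu_def, add_sub_cancel]; ring
end

namespace Real

lemma abs_cos_lt_one_of_sin_ne_zero {x : ℝ} (hx : sin x ≠ 0) : |cos x| < 1 := by
  rw [← sq_lt_one_iff_abs_lt_one]
  nlinarith [sin_sq_add_cos_sq x, sq_pos_of_ne_zero hx]

lemma hasSum_sin_mul_cos_pow {x : ℝ} (hx : sin x ≠ 0) :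
    HasSum (fun k : ℕ => sin x * cos x ^ k) (sin x / (1 - cos x)) := by
  simpa [div_eq_mul_inv] using
    (hasSum_geometric_of_abs_lt_one (abs_cos_lt_one_of_sin_ne_zero hx)).mul_left (sin x)

lemma hasSum_sq_sin_mul_cos_pow {x : ℝ} (hx : sin x ≠ 0) :
    HasSum (fun k : ℕ => (sin x * cos x ^ k) ^ 2) 1 := by
  have hc : |cos x ^ 2| < 1 := by
    simpa [abs_pow] using pow_lt_one₀ (abs_nonneg _) (abs_cos_lt_one_of_sin_ne_zero hx) two_ne_zero
  have h := (hasSum_geometric_of_abs_lt_one hc).mul_left (sin x ^ 2)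
  rw [← sin_sq, mul_inv_cancel₀ (pow_ne_zero 2 hx)] at h
  simpa [mul_pow, ← pow_mul, mul_comm 2] using h

lemma sin_div_one_sub_cos_two_mul_arctan_inv (T : ℝ) :
    sin (2 * arctan T⁻¹) / (1 - cos (2 * arctan T⁻¹)) = T := by
  set φ := arctan T⁻¹ with hφ
  have hT : T = cos φ / sin φ := by
    rw [← inv_div, ← tan_eq_sin_div_cos, hφ, tan_arctan, inv_inv]
  have hcos : 1 - cos (2 * φ) = 2 * sin φ ^ 2 := by
    rw [cos_two_mul]; linarith [sin_sq_add_cos_sq φ]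
  rw [sin_two_mul, hcos, hT]
  field_simp

lemma tendsto_two_mul_arctan_inv_atTop :
    Tendsto (fun T : ℝ => 2 * arctan T⁻¹) atTop (𝓝[>] 0) := by
  refine tendsto_nhdsWithin_iff.2 ⟨?_, ?_⟩
  · simpa [arctan_zero] using
      ((continuous_arctan.tendsto 0).comp tendsto_inv_atTop_zero).const_mul 2
  · filter_upwards [eventually_gt_atTop 0] with T hT
    simpa [arctan_zero] using arctan_strictMono (inv_pos.2 hT)

end Real

open Complex ComplexConjugate in
open scoped Real in
lemma not_tendsto_exp_ofReal_mul_atTop {w : ℂ} (hre : w.re = 0) (hw : w ≠ 0) (B : ℂ) :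
    ¬ Tendsto (fun T : ℝ => exp (T * w)) atTop (𝓝 B) := by
  have him : w.im ≠ 0 := fun h => hw (Complex.ext hre h)
  wlog hpos : 0 < w.im generalizing w B
  · intro h
    refine this (w := conj w) (by simpa using hre) (by simpa using hw) (conj B)
      (by simpa using him) (by simpa using lt_of_le_of_ne (not_lt.1 hpos) him) ?_
    refine ((continuous_conj.tendsto B).comp h).congr fun T => ?_
    simp [← exp_conj]
  set b := w.im
  have hwb : w = b * I := by apply Complex.ext <;> simp [hre, b]
  intro h
  -- along `T_n = (θ + 2πn) / b` the phase is constantly `exp (θ i)`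
  have hB : ∀ θ : ℝ, exp (θ * I) = B := by
    intro θ
    have hT : Tendsto (fun n : ℕ => θ / b + 2 * π / b * n) atTop atTop :=
      tendsto_atTop_add_const_left _ _
        (tendsto_natCast_atTop_atTop.const_mul_atTop (by positivity))
    refine tendsto_nhds_unique tendsto_const_nhds ((h.comp hT).congr fun n => ?_)
    have hexp : ((θ / b + 2 * π / b * n : ℝ) : ℂ) * w = θ * I + n * (2 * π * I) := by
      rw [hwb]
      push_cast
      field_simp [Complex.ofReal_ne_zero.2 him]
    rw [Function.comp_apply, hexp, exp_add, exp_nat_mul_two_pi_mul_I, mul_one]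
  have h1 : (1 : ℂ) = -1 := by simpa [exp_pi_mul_I] using (hB 0).trans (hB π).symm
  norm_num at h1

noncomputable def logRemainder (χ μ ν : ℂ → ℂ) (z : ℂ) (τ : ℝ) : ℂ :=
  Complex.log (χ (τ * z)) - τ * μ z - (τ : ℂ) ^ 2 * ((ν z - μ z ^ 2) / 2)

namespace AssumptionA2

variable {χ μ ν : ℂ → ℂ} {c₀ C : ℝ}

lemma isBigO_taylor (hA2 : AssumptionA2 χ μ ν c₀ C) (z : ℂ) :
    (fun τ : ℝ => χ (τ * z) - 1 - τ * μ z - (τ : ℂ) ^ 2 * (ν z / 2)) =O[𝓝 0]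
      fun τ : ℝ => (τ : ℂ) ^ 3 := by
  have hsmall : ∀ᶠ τ : ℝ in 𝓝 0, ‖(τ : ℂ) * z‖ < c₀ :=
    ((Complex.continuous_ofReal.mul continuous_const).norm.tendsto' 0 0 (by simp)).eventually
      (gt_mem_nhds hA2.c₀_pos)
  refine IsBigO.of_bound (C * ‖z‖ ^ 3) ?_
  filter_upwards [hsmall] with τ hτ
  have h := hA2.expansion _ hτ
  rw [hA2.μ_hom, hA2.ν_hom] at h
  calc ‖χ (τ * z) - 1 - τ * μ z - (τ : ℂ) ^ 2 * (ν z / 2)‖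
      = ‖χ (τ * z) - 1 - τ * μ z - (1 / 2 : ℂ) * ((τ : ℂ) ^ 2 * ν z)‖ := by ring_nf
    _ ≤ C * ‖(τ : ℂ) * z‖ ^ 3 := h
    _ = C * ‖z‖ ^ 3 * ‖(τ : ℂ) ^ 3‖ := by rw [norm_mul, norm_pow]; ring

lemma eventually_ne_zero (hA2 : AssumptionA2 χ μ ν c₀ C) (z : ℂ) :
    ∀ᶠ τ : ℝ in 𝓝 0, χ (τ * z) ≠ 0 := by
  have hτ : Tendsto (fun τ : ℝ => (τ : ℂ)) (𝓝 0) (𝓝 0) :=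
    Complex.continuous_ofReal.tendsto' 0 0 rfl
  have h := (isBigO_sub_one_of_isBigO_taylor hτ (hA2.isBigO_taylor z)).trans_tendsto hτ
  filter_upwards [h.eventually_ne (by norm_num : (0 : ℂ) ≠ -1)] with τ hne hχ
  simp [hχ] at hne

lemma isBigO_logRemainder (hA2 : AssumptionA2 χ μ ν c₀ C) (z : ℂ) :
    logRemainder χ μ ν z =O[𝓝 0] fun τ : ℝ => (τ : ℂ) ^ 3 := by
  have hτ : Tendsto (fun τ : ℝ => (τ : ℂ)) (𝓝 0) (𝓝 0) :=
    Complex.continuous_ofReal.tendsto' 0 0 rfl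
  refine (isBigO_log_sub_taylor hτ (hA2.isBigO_taylor z)).congr_left fun τ => ?_
  simp only [logRemainder]
  ring

open Real

lemma exists_logRemainder_bound (hA2 : AssumptionA2 χ μ ν c₀ C) (z : ℂ) :
    ∃ c, ∀ᶠ x in 𝓝[>] (0 : ℝ), 0 < sin x ∧ ∀ k : ℕ,
      ‖logRemainder χ μ ν z (sin x * cos x ^ k)‖ ≤ c * sin x * (sin x * cos x ^ k) ^ 2 ∧
        χ (((sin x * cos x ^ k : ℝ) : ℂ) * z) ≠ 0 := by
  obtain ⟨c, hc, hRc⟩ := (hA2.isBigO_logRemainder z).exists_nonneg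
  obtain ⟨δ, hδ, hgood⟩ :=
    Metric.eventually_nhds_iff.1 (hRc.bound.and (hA2.eventually_ne_zero z))
  have hsin : ∀ᶠ x in 𝓝[>] (0 : ℝ), 0 < sin x ∧ sin x < δ := by
    have h0 : ∀ᶠ x in 𝓝[>] (0 : ℝ), 0 < sin x :=
      eventually_of_mem (Ioo_mem_nhdsGT pi_pos) fun x hx => sin_pos_of_pos_of_lt_pi hx.1 hx.2
    have h1 : ∀ᶠ x in 𝓝 (0 : ℝ), sin x < δ :=
      (continuous_sin.tendsto' 0 0 sin_zero).eventually (gt_mem_nhds hδ)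
    exact h0.and (nhdsWithin_le_nhds h1)
  refine ⟨c, hsin.mono fun x ⟨hs, hδx⟩ => ⟨hs, fun k => ?_⟩⟩
  have habs : |sin x * cos x ^ k| ≤ sin x := by
    rw [abs_mul, abs_pow, abs_of_pos hs]
    exact mul_le_of_le_one_right hs.le (pow_le_one₀ (abs_nonneg _) (abs_cos_le_one x))
  obtain ⟨hbound, hne⟩ := hgood (y := sin x * cos x ^ k) (by
    rw [Real.dist_eq, sub_zero]; exact habs.trans_lt hδx)
  refine ⟨hbound.trans ?_, hne⟩
  calc c * ‖((sin x * cos x ^ k : ℝ) : ℂ) ^ 3‖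
      = c * (|sin x * cos x ^ k| * (sin x * cos x ^ k) ^ 2) := by
        rw [norm_pow, Complex.norm_real, Real.norm_eq_abs, pow_succ', sq_abs]
    _ ≤ c * (sin x * (sin x * cos x ^ k) ^ 2) := by gcongr
    _ = c * sin x * (sin x * cos x ^ k) ^ 2 := by ring

theorem exists_tendsto_prod (hA2 : AssumptionA2 χ μ ν c₀ C) (z : ℂ) :
    ∃ E : ℝ → ℂ, Tendsto E (𝓝[>] 0) (𝓝 0) ∧ ∀ᶠ x in 𝓝[>] 0,
      Tendsto (fun K : ℕ => ∏ k ∈ Finset.range K, χ (((sin x * cos x ^ k : ℝ) : ℂ) * z)) atTop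
        (𝓝 (Complex.exp (((sin x / (1 - cos x) : ℝ) : ℂ) * μ z + (ν z - μ z ^ 2) / 2 + E x))) := by
  obtain ⟨c, hc⟩ := hA2.exists_logRemainder_bound z
  refine ⟨fun x => ∑' k, logRemainder χ μ ν z (sin x * cos x ^ k), ?_, ?_⟩
  · refine squeeze_zero_norm' ?_ (?_ : Tendsto (fun x => c * sin x) _ (𝓝 0))
    · filter_upwards [hc] with x ⟨hs, hk⟩
      simpa using tsum_of_norm_bounded ((hasSum_sq_sin_mul_cos_pow hs.ne').mul_left (c * sin x))
        fun k => (hk k).1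
    · simpa using ((continuous_sin.tendsto' 0 0 sin_zero).const_mul c).mono_left
        nhdsWithin_le_nhds
  · filter_upwards [hc] with x ⟨hs, hk⟩
    have hR : Summable fun k => logRemainder χ μ ν z (sin x * cos x ^ k) :=
      .of_norm_bounded ((hasSum_sq_sin_mul_cos_pow hs.ne').mul_left (c * sin x)).summable
        fun k => (hk k).1
    have hlin := (Complex.hasSum_ofReal.2 (hasSum_sin_mul_cos_pow hs.ne')).mul_right (μ z)
    have hquad := (Complex.hasSum_ofReal.2 (hasSum_sq_sin_mul_cos_pow hs.ne')).mul_right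
      ((ν z - μ z ^ 2) / 2)
    have hsum := (hlin.add hquad).add hR.hasSum
    rw [Complex.ofReal_one, one_mul] at hsum
    refine (Complex.hasProd_of_hasSum_log (fun k => (hk k).2) ?_).tendsto_prod_nat
    refine hsum.congr_fun fun k => ?_
    simp only [logRemainder]
    push_cast
    ring

end AssumptionA2

open Real in
theorem statement11_general (χ : ℂ → ℂ) (μ ν : ℂ → ℂ) (c₀ C : ℝ)
    (hA2 : AssumptionA2 χ μ ν c₀ C)
    (z₀ : ℂ) (him : (μ z₀).re = 0) (hne : μ z₀ ≠ 0) :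
    ¬ ∃ A : ℂ, ∀ ε > (0 : ℝ), ∃ lam₀ > (0 : ℝ), ∀ lam : ℝ, 0 < lam → lam < lam₀ →
      ∀ F : ℂ,
        Tendsto (fun K : ℕ => ∏ k ∈ Finset.range K,
            χ (((Real.sin lam * Real.cos lam ^ k : ℝ) : ℂ) * z₀)) atTop (𝓝 F) →
        ‖F - A‖ < ε := by
  rintro ⟨A, hA⟩
  obtain ⟨E, hE, hprod⟩ := hA2.exists_tendsto_prod z₀
  set κ := (ν z₀ - μ z₀ ^ 2) / 2
  have hlim : Tendsto (fun x => Complex.exp (((sin x / (1 - cos x) : ℝ) : ℂ) * μ z₀ + κ + E x))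
      (𝓝[>] 0) (𝓝 A) := by
    refine Metric.tendsto_nhds.2 fun ε hε => ?_
    obtain ⟨lam₀, hlam₀, hclose⟩ := hA ε hε
    filter_upwards [hprod, Ioo_mem_nhdsGT hlam₀] with x hx hx₀
    exact (dist_eq_norm _ _).trans_lt (hclose x hx₀.1 hx₀.2 _ hx)
  have hphase : Tendsto (fun x => Complex.exp (((sin x / (1 - cos x) : ℝ) : ℂ) * μ z₀))
      (𝓝[>] 0) (𝓝 (A * Complex.exp (-(κ + 0)))) := by
    refine (hlim.mul ((hE.const_add κ).neg.cexp)).congr fun x => ?_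
    rw [← Complex.exp_add]
    ring_nf
  refine not_tendsto_exp_ofReal_mul_atTop him hne _
    ((hphase.comp tendsto_two_mul_arctan_inv_atTop).congr fun T => ?_)
  rw [Function.comp_apply, sin_div_one_sub_cos_two_mul_arctan_inv]

/-- no limit for non-centered reservoirs. If `χ` satisfies (A1) and
(A2) with data `(μ, ν, c₀, C)` and there is `z₀` with `μ z₀` purely imaginary and nonzero,
then the limit `lim_{λ→0⁺} ∏_{k≥0} χ(sin λ (cos λ)^k z₀)` does not exist: there is no
`A ∈ ℂ` such that for every `ε > 0` there is `λ₀ > 0` so that for all `0 < λ < λ₀` every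
value `F` of the (convergent) infinite product satisfies `‖F − A‖ < ε`. -/
theorem statement11 (χ : ℂ → ℂ) (μ ν : ℂ → ℂ) (c₀ C : ℝ)
    (hA1 : AssumptionA1 χ) (hA2 : AssumptionA2 χ μ ν c₀ C)
    (z₀ : ℂ) (him : (μ z₀).re = 0) (hne : μ z₀ ≠ 0) :
    ¬ ∃ A : ℂ, ∀ ε > (0 : ℝ), ∃ lam₀ > (0 : ℝ), ∀ lam : ℝ, 0 < lam → lam < lam₀ →
      ∀ F : ℂ,
        Tendsto (fun K : ℕ => ∏ k ∈ Finset.range K,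
            χ (((Real.sin lam * Real.cos lam ^ k : ℝ) : ℂ) * z₀)) atTop (𝓝 F) →
        ‖F - A‖ < ε :=
  statement11_general χ μ ν c₀ C hA2 z₀ him hne
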